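/- arXiv:1905.04935 — 2 statements merged into one kernel-verified Lean document; each statement's English description precedes it below -/
import Mathlib

section
/- Let (a_n)_{n∈ℕ} be a sequence of real numbers and C ≥ 0 a constant such that |a_{n+m} − a_n| ≤ C·m + C for all n, m ∈ ℕ. Fix an integer N ≥ 1 and suppose that A := limsup_{j→∞} a_{jN}/(jN) and a := liminf_{j→∞} a_{jN}/(jN) are finite real numbers. Then a ≤ liminf_{n→∞} a_n/n ≤ limsup_{n→∞} a_n/n ≤ A. -/
/-!
Write `m = ⌊n / N⌋ N` for the multiple of `N` just below `n`. The almost-Lipschitz bound gives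
`|a n - a m| ≤ C N + C` and `|a m / m| ≤ |a 0| + 2 C`, so `a n / n - a m / m = O(1 / n)`.
Thus `a n / n` is the sequence `j ↦ a (j N) / (j N)` reindexed by `n ↦ ⌊n / N⌋` up to an error
tending to `0`; reindexing along `⌊· / N⌋`, which maps `atTop` onto `atTop`, changes neither
`liminf` nor `limsup`, and neither does a vanishing error.
-/

open Filter Topology

section LimsupPerturbation

variable {ι : Type*} {l : Filter ι} {u v : ι → ℝ}

theorem isBoundedUnder_le_of_tendsto_sub (hv : IsBoundedUnder (· ≤ ·) l v)
    (h : Tendsto (u - v) l (𝓝 0)) : IsBoundedUnder (· ≤ ·) l u := by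
  simpa using isBoundedUnder_le_add hv h.isBoundedUnder_le

theorem isBoundedUnder_ge_of_tendsto_sub (hv : IsBoundedUnder (· ≥ ·) l v)
    (h : Tendsto (u - v) l (𝓝 0)) : IsBoundedUnder (· ≥ ·) l u := by
  simpa using isBoundedUnder_ge_add hv h.isBoundedUnder_ge

variable [l.NeBot]

theorem limsup_le_limsup_of_tendsto_sub (hv : IsBoundedUnder (· ≤ ·) l v)
    (hv' : IsBoundedUnder (· ≥ ·) l v) (h : Tendsto (u - v) l (𝓝 0)) :
    limsup u l ≤ limsup v l := by
  have hu : u = v + (u - v) := (add_sub_cancel v u).symm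
  calc limsup u l = limsup (v + (u - v)) l := by rw [← hu]
    _ ≤ limsup v l + limsup (u - v) l :=
      limsup_add_le hv' hv h.isBoundedUnder_ge.isCoboundedUnder_le h.isBoundedUnder_le
    _ = limsup v l := by rw [h.limsup_eq, add_zero]

theorem liminf_le_liminf_of_tendsto_sub (hv : IsBoundedUnder (· ≤ ·) l v)
    (hv' : IsBoundedUnder (· ≥ ·) l v) (h : Tendsto (u - v) l (𝓝 0)) :
    liminf v l ≤ liminf u l := by
  have hu : u = v + (u - v) := (add_sub_cancel v u).symm
  calc liminf v l = liminf v l + liminf (u - v) l := by rw [h.liminf_eq, add_zero]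
    _ ≤ liminf (v + (u - v)) l :=
      le_liminf_add hv' hv h.isBoundedUnder_ge h.isBoundedUnder_le.isCoboundedUnder_ge
    _ = liminf u l := by rw [← hu]

end LimsupPerturbation

theorem abs_div_sub_div_le (u v : ℝ) {x y : ℝ} (hy : 0 < y) (hyx : y ≤ x) :
    |u / x - v / y| ≤ (|u - v| + |v / y| * (x - y)) / x := by
  have hx : 0 < x := hy.trans_le hyx
  have hsplit : u / x - v / y = ((u - v) - v / y * (x - y)) / x := by
    field_simp
    ring
  rw [hsplit, abs_div, abs_of_pos hx]
  gcongr
  calc |u - v - v / y * (x - y)| ≤ |u - v| + |v / y * (x - y)| := abs_sub _ _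
    _ = |u - v| + |v / y| * (x - y) := by rw [abs_mul, abs_of_nonneg (sub_nonneg.2 hyx)]

namespace AlmostLipschitz

variable {a : ℕ → ℝ} {C : ℝ} (hlip : ∀ n m : ℕ, |a (n + m) - a n| ≤ C * m + C)
include hlip

theorem abs_sub_le_of_le_of_le_add {m n k : ℕ} (hmn : m ≤ n) (hnk : n ≤ m + k) :
    |a n - a m| ≤ C * k + C := by
  obtain ⟨d, rfl⟩ := Nat.exists_eq_add_of_le hmn
  have hC : 0 ≤ C := by simpa using hlip 0 0
  have hdk : (d : ℝ) ≤ k := by exact_mod_cast (Nat.add_le_add_iff_left).1 hnk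
  linarith [hlip m d, mul_le_mul_of_nonneg_left hdk hC]

theorem abs_div_le {m : ℕ} (hm : 0 < m) : |a m / m| ≤ |a 0| + 2 * C := by
  have hC : 0 ≤ C := by simpa using hlip 0 0
  have hm1 : (1 : ℝ) ≤ m := by exact_mod_cast hm
  have ham : |a m| ≤ |a 0| + (C * m + C) := by
    have := hlip 0 m
    rw [zero_add] at this
    linarith [abs_sub_abs_le_abs_sub (a m) (a 0)]
  rw [abs_div, Nat.abs_cast, div_le_iff₀ (by positivity)]
  nlinarith [abs_nonneg (a 0)]

theorem abs_div_sub_div_floor_le {N n : ℕ} (hN : 0 < N) (hNn : N ≤ n) :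
    |a n / n - a (n / N * N) / ↑(n / N * N)| ≤ (C * N + C + (|a 0| + 2 * C) * N) / n := by
  set m := n / N * N
  have hm0 : 0 < m := Nat.mul_pos (Nat.div_pos hNn hN) hN
  have hmn : m ≤ n := Nat.div_mul_le_self n N
  have hnm : n ≤ m + N := (Nat.lt_div_mul_add hN).le
  have hnm' : (n : ℝ) - m ≤ N := by
    rw [sub_le_iff_le_add']
    exact_mod_cast hnm
  calc |a n / n - a m / m| ≤ (|a n - a m| + |a m / m| * (n - m)) / n :=
        abs_div_sub_div_le _ _ (by exact_mod_cast hm0) (by exact_mod_cast hmn)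
    _ ≤ (C * N + C + (|a 0| + 2 * C) * N) / n := by
      have hdiff := abs_sub_le_of_le_of_le_add hlip hmn hnm
      have hmean := abs_div_le hlip hm0
      have hgap : |a m / m| * (n - m) ≤ (|a 0| + 2 * C) * N :=
        mul_le_mul hmean hnm' (sub_nonneg.2 (by exact_mod_cast hmn)) ((abs_nonneg _).trans hmean)
      gcongr ?_ / _
      linarith

theorem tendsto_div_sub_div_floor {N : ℕ} (hN : 0 < N) :
    Tendsto (fun n : ℕ => a n / n - a (n / N * N) / ↑(n / N * N)) atTop (𝓝 0) :=
  squeeze_zero_norm' ((eventually_ge_atTop N).mono fun _ hn => abs_div_sub_div_floor_le hlip hN hn)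
    (tendsto_const_div_atTop_nhds_zero_nat _)

end AlmostLipschitz

theorem neighbour_approximation_general
    (a : ℕ → ℝ) (C : ℝ)
    (hlip : ∀ n m : ℕ, |a (n + m) - a n| ≤ C * m + C)
    (N : ℕ) (hN : 1 ≤ N)
    (hbddAbove : IsBoundedUnder (· ≤ ·) atTop
      (fun j : ℕ => a (j * N) / ((j * N : ℕ) : ℝ)))
    (hbddBelow : IsBoundedUnder (· ≥ ·) atTop
      (fun j : ℕ => a (j * N) / ((j * N : ℕ) : ℝ))) :
    liminf (fun j : ℕ => a (j * N) / ((j * N : ℕ) : ℝ)) atTop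
        ≤ liminf (fun n : ℕ => a n / (n : ℝ)) atTop ∧
      liminf (fun n : ℕ => a n / (n : ℝ)) atTop
        ≤ limsup (fun n : ℕ => a n / (n : ℝ)) atTop ∧
      limsup (fun n : ℕ => a n / (n : ℝ)) atTop
        ≤ limsup (fun j : ℕ => a (j * N) / ((j * N : ℕ) : ℝ)) atTop := by
  set g : ℕ → ℝ := fun j => a (j * N) / ((j * N : ℕ) : ℝ)
  set f : ℕ → ℝ := fun n => a n / (n : ℝ)
  have hmap : map (· / N) atTop = atTop := map_div_atTop_eq_nat N hN
  have hφ : Tendsto (· / N) atTop atTop := hmap.le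
  have hsub : Tendsto (f - g ∘ (· / N)) atTop (𝓝 0) :=
    AlmostLipschitz.tendsto_div_sub_div_floor hlip hN
  have hup : IsBoundedUnder (· ≤ ·) atTop (g ∘ (· / N)) := hφ.isBoundedUnder_comp hbddAbove
  have hlo : IsBoundedUnder (· ≥ ·) atTop (g ∘ (· / N)) := hφ.isBoundedUnder_comp hbddBelow
  refine ⟨?_, liminf_le_limsup (isBoundedUnder_le_of_tendsto_sub hup hsub)
    (isBoundedUnder_ge_of_tendsto_sub hlo hsub), ?_⟩
  · calc liminf g atTop = liminf (g ∘ (· / N)) atTop := by rw [liminf_comp, hmap]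
      _ ≤ liminf f atTop := liminf_le_liminf_of_tendsto_sub hup hlo hsub
  · calc limsup f atTop ≤ limsup (g ∘ (· / N)) atTop :=
        limsup_le_limsup_of_tendsto_sub hup hlo hsub
      _ = limsup g atTop := by rw [limsup_comp, hmap]

/-- **Neighbour approximation lemma for real sequences.**
If `|a (n+m) - a n| ≤ C*m + C` for all `n m`, `N ≥ 1`, and the averaged
subsequence `j ↦ a (j*N) / (j*N)` is bounded above and below (so that its
limsup `A` and liminf `a` are finite real numbers), then
`a ≤ liminf aₙ/n ≤ limsup aₙ/n ≤ A`. -/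
theorem neighbour_approximation
    (a : ℕ → ℝ) (C : ℝ) (hC : 0 ≤ C)
    (hlip : ∀ n m : ℕ, |a (n + m) - a n| ≤ C * m + C)
    (N : ℕ) (hN : 1 ≤ N)
    (hbddAbove : IsBoundedUnder (· ≤ ·) atTop
      (fun j : ℕ => a (j * N) / ((j * N : ℕ) : ℝ)))
    (hbddBelow : IsBoundedUnder (· ≥ ·) atTop
      (fun j : ℕ => a (j * N) / ((j * N : ℕ) : ℝ))) :
    liminf (fun j : ℕ => a (j * N) / ((j * N : ℕ) : ℝ)) atTop
        ≤ liminf (fun n : ℕ => a n / (n : ℝ)) atTop ∧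
      liminf (fun n : ℕ => a n / (n : ℝ)) atTop
        ≤ limsup (fun n : ℕ => a n / (n : ℝ)) atTop ∧
      limsup (fun n : ℕ => a n / (n : ℝ)) atTop
        ≤ limsup (fun j : ℕ => a (j * N) / ((j * N : ℕ) : ℝ)) atTop :=
  neighbour_approximation_general a C hlip N hN hbddAbove hbddBelow
end

section
/- Let (Ω, 𝓕, P) be a probability space, C ≥ 0 a constant, and (f_n)_{n∈ℕ} a sequence of measurable real-valued functions on Ω such that for P-almost every ω one has |f_{n+m}(ω) − f_n(ω)| ≤ C·m + C for all n, m ∈ ℕ. Suppose that for every ε > 0 and every ζ > 0 there exist an integer N ≥ 1 and a measurable set E ⊆ Ω with P(E) ≥ 1 − ζ such that for every ω ∈ E the quantities limsup_{j→∞} f_{jN}(ω)/(jN) and liminf_{j→∞} f_{jN}(ω)/(jN) are finite and satisfy limsup_{j→∞} f_{jN}(ω)/(jN) − liminf_{j→∞} f_{jN}(ω)/(jN) ≤ ε. Then for P-almost every ω ∈ Ω the sequence (f_n(ω)/n)_{n≥1} converges. -/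
/-!
Fix `ω` and put `u n = f n ω / n`. The coarse Lipschitz bound makes `u n` and `u (⌊n/N⌋ N)`
asymptotically equal, so `limsup u - liminf u` is at most the oscillation of the sped-up
subsequence `j ↦ u (j N)`. Borel–Cantelli with `ζ_k = 2⁻ᵏ` puts almost every `ω` in all but
finitely many of the good sets chosen for `ε_k = 1/(k+1)`, so the oscillation of `u` vanishes.
-/

open Filter MeasureTheory Topology

def OscillationLE {ι : Type*} (l : Filter ι) (u : ι → ℝ) (ε : ℝ) : Prop :=
  IsBoundedUnder (· ≤ ·) l u ∧ IsBoundedUnder (· ≥ ·) l u ∧ limsup u l - liminf u l ≤ ε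

namespace OscillationLE

variable {ι κ : Type*} {l : Filter ι} {u w : ι → ℝ} {ε δ : ℝ}

lemma mono (h : OscillationLE l u ε) (hεδ : ε ≤ δ) : OscillationLE l u δ :=
  ⟨h.1, h.2.1, h.2.2.trans hεδ⟩

lemma of_tendsto_sub [l.NeBot] (hw : OscillationLE l w ε) (huw : Tendsto (u - w) l (𝓝 0)) :
    OscillationLE l u ε := by
  obtain ⟨hw_le, hw_ge, hw_osc⟩ := hw
  have hd_le := huw.isBoundedUnder_le
  have hd_ge := huw.isBoundedUnder_ge
  have hu : u = (u - w) + w := (sub_add_cancel u w).symm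
  have hlimsup : limsup u l ≤ limsup w l := by
    calc limsup u l = limsup ((u - w) + w) l := by rw [← hu]
      _ ≤ limsup (u - w) l + limsup w l :=
        limsup_add_le hd_ge hd_le hw_ge.isCoboundedUnder_le hw_le
      _ = limsup w l := by rw [huw.limsup_eq, zero_add]
  have hliminf : liminf w l ≤ liminf u l := by
    calc liminf w l = liminf (u - w) l + liminf w l := by rw [huw.liminf_eq, zero_add]
      _ ≤ liminf ((u - w) + w) l :=
        le_liminf_add hd_ge hd_le hw_ge hw_le.isCoboundedUnder_ge
      _ = liminf u l := by rw [← hu]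
  exact ⟨hu ▸ isBoundedUnder_le_add hd_le hw_le, hu ▸ isBoundedUnder_ge_add hd_ge hw_ge,
    by linarith⟩

lemma comp_tendsto {la : Filter κ} [la.NeBot] {v : ι → ℝ} {q : κ → ι}
    (hv : OscillationLE l v ε) (hq : Tendsto q la l) : OscillationLE la (v ∘ q) ε := by
  obtain ⟨hv_le, hv_ge, hv_osc⟩ := hv
  have hvq_le := hq.isBoundedUnder_comp hv_le
  have hvq_ge := hq.isBoundedUnder_comp hv_ge
  have hlimsup : limsup (v ∘ q) la ≤ limsup v l :=
    hq.limsup_comp_le_limsup hvq_ge.isCoboundedUnder_le hv_le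
  have hliminf : liminf v l ≤ liminf (v ∘ q) la :=
    hq.liminf_le_liminf_comp hvq_le.isCoboundedUnder_ge hv_ge
  exact ⟨hvq_le, hvq_ge, by linarith⟩

end OscillationLE

lemma exists_tendsto_of_forall_oscillationLE {ι : Type*} {l : Filter ι} [l.NeBot] {u : ι → ℝ}
    (h : ∀ ε > 0, OscillationLE l u ε) : ∃ L, Tendsto u l (𝓝 L) := by
  obtain ⟨hu_le, hu_ge, -⟩ := h 1 one_pos
  have hosc : limsup u l ≤ liminf u l :=
    le_of_forall_pos_le_add fun ε hε => by linarith [(h ε hε).2.2]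
  exact ⟨limsup u l, tendsto_of_liminf_eq_limsup
    (le_antisymm (liminf_le_limsup hu_le hu_ge) hosc) rfl hu_le hu_ge⟩

def CoarseLipschitzWith (C : ℝ) (g : ℕ → ℝ) : Prop :=
  ∀ n m : ℕ, |g (n + m) - g n| ≤ C * m + C

namespace CoarseLipschitzWith

variable {C : ℝ} {g : ℕ → ℝ}

lemma nonneg (hg : CoarseLipschitzWith C g) : 0 ≤ C := by
  simpa using hg 0 0

lemma abs_div_le (hg : CoarseLipschitzWith C g) {n : ℕ} (hn : n ≠ 0) :
    |g n / n| ≤ |g 0| + 2 * C := by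
  have hn1 : (1 : ℝ) ≤ n := Nat.one_le_cast.2 (Nat.one_le_iff_ne_zero.2 hn)
  have hgn : |g n| ≤ |g 0| + (C * n + C) := by
    have := hg 0 n
    rw [zero_add] at this
    linarith [abs_sub_abs_le_abs_sub (g n) (g 0)]
  rw [abs_div, Nat.abs_cast, div_le_iff₀ (by positivity)]
  nlinarith [abs_nonneg (g 0), hg.nonneg]

lemma tendsto_div_sub_div (hg : CoarseLipschitzWith C g) {N : ℕ} {m : ℕ → ℕ}
    (hm : ∀ n, m n ≤ n) (hmN : ∀ n, n ≤ m n + N) :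
    Tendsto (fun n : ℕ => g n / n - g (m n) / m n) atTop (𝓝 0) := by
  set K := C * N + C + (|g 0| + 2 * C) * N
  refine squeeze_zero_norm' ?_ (tendsto_const_div_atTop_nhds_zero_nat K)
  filter_upwards [eventually_gt_atTop N] with n hn
  have hm0 : m n ≠ 0 := by have := hmN n; omega
  have hn0 : (n : ℝ) ≠ 0 := Nat.cast_ne_zero.2 (by omega)
  have hmn : (n : ℝ) - m n ≤ N := by
    have : (n : ℝ) ≤ m n + N := by exact_mod_cast hmN n
    linarith
  have hmn0 : (0 : ℝ) ≤ n - m n := sub_nonneg.2 (by exact_mod_cast hm n)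
  have hincr : |g n - g (m n)| ≤ C * N + C := by
    have := hg (m n) (n - m n)
    rw [Nat.add_sub_cancel' (hm n), Nat.cast_sub (hm n)] at this
    linarith [mul_le_mul_of_nonneg_left hmn hg.nonneg]
  have hdrift : |g (m n) / m n * (n - m n)| ≤ (|g 0| + 2 * C) * N := by
    rw [abs_mul, abs_of_nonneg hmn0]
    exact mul_le_mul (hg.abs_div_le hm0) hmn hmn0 ((abs_nonneg _).trans (hg.abs_div_le hm0))
  have hsplit : g n / n - g (m n) / m n = (g n - g (m n) - g (m n) / m n * (n - m n)) / n := by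
    field_simp
    ring
  rw [Real.norm_eq_abs, hsplit, abs_div, Nat.abs_cast]
  gcongr
  calc |g n - g (m n) - g (m n) / m n * (n - m n)|
      ≤ |g n - g (m n)| + |g (m n) / m n * (n - m n)| := abs_sub _ _
    _ ≤ K := by linarith

lemma oscillationLE_div_of_mul (hg : CoarseLipschitzWith C g) {N : ℕ} (hN : 0 < N) {ε : ℝ}
    (hsub : OscillationLE atTop (fun j : ℕ => g (j * N) / ((j * N : ℕ) : ℝ)) ε) :
    OscillationLE atTop (fun n : ℕ => g n / n) ε :=
  (hsub.comp_tendsto (Nat.tendsto_div_const_atTop hN.ne')).of_tendsto_sub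
    (hg.tendsto_div_sub_div (m := fun n => n / N * N) (fun n => Nat.div_mul_le_self n N)
      fun _ => (Nat.lt_div_mul_add hN).le)

end CoarseLipschitzWith

lemma ae_eventually_mem_of_summable {Ω : Type*} [MeasurableSpace Ω] {P : Measure Ω}
    [IsProbabilityMeasure P] {E : ℕ → Set Ω} {ζ : ℕ → ℝ} (hE : ∀ k, MeasurableSet (E k))
    (hζ0 : ∀ k, 0 ≤ ζ k) (hζ : Summable ζ) (hPE : ∀ k, 1 - ENNReal.ofReal (ζ k) ≤ P (E k)) :
    ∀ᵐ ω ∂P, ∀ᶠ k in atTop, ω ∈ E k := by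
  have hcompl : ∀ k, P (E k)ᶜ ≤ ENNReal.ofReal (ζ k) := fun k => by
    rw [prob_compl_eq_one_sub (hE k)]
    exact tsub_le_iff_tsub_le.1 (hPE k)
  have hsum : ∑' k, P (E k)ᶜ ≠ ⊤ := by
    refine ne_top_of_le_ne_top ?_ (ENNReal.tsum_le_tsum hcompl)
    rw [← ENNReal.ofReal_tsum_of_nonneg hζ0 hζ]
    exact ENNReal.ofReal_ne_top
  simpa using ae_eventually_notMem hsum

theorem ae_convergence_of_normalized_sequence_general
    {Ω : Type*} [MeasurableSpace Ω] (P : Measure Ω) [IsProbabilityMeasure P]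
    (C : ℝ)
    (f : ℕ → Ω → ℝ)
    (hlip : ∀ᵐ ω ∂P, ∀ n m : ℕ, |f (n + m) ω - f n ω| ≤ C * m + C)
    (h : ∀ ε : ℝ, 0 < ε → ∀ ζ : ℝ, 0 < ζ → ∃ N : ℕ, 1 ≤ N ∧ ∃ E : Set Ω,
      MeasurableSet E ∧ 1 - ENNReal.ofReal ζ ≤ P E ∧
      ∀ ω ∈ E,
        IsBoundedUnder (· ≤ ·) atTop
          (fun j : ℕ => f (j * N) ω / ((j * N : ℕ) : ℝ)) ∧
        IsBoundedUnder (· ≥ ·) atTop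
          (fun j : ℕ => f (j * N) ω / ((j * N : ℕ) : ℝ)) ∧
        limsup (fun j : ℕ => f (j * N) ω / ((j * N : ℕ) : ℝ)) atTop -
          liminf (fun j : ℕ => f (j * N) ω / ((j * N : ℕ) : ℝ)) atTop ≤ ε) :
    ∀ᵐ ω ∂P, ∃ L : ℝ, Tendsto (fun n : ℕ => f n ω / (n : ℝ)) atTop (nhds L) := by
  choose N hN E hE hPE hosc using fun k : ℕ =>
    h (1 / ((k : ℝ) + 1)) (by positivity) ((1 / 2) ^ k) (by positivity)
  filter_upwards [hlip, ae_eventually_mem_of_summable hE (fun k => by positivity)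
    summable_geometric_two hPE] with ω hω hmem
  refine exists_tendsto_of_forall_oscillationLE fun ε hε => ?_
  obtain ⟨k, hωk, hkε⟩ := (hmem.and
    (tendsto_one_div_add_atTop_nhds_zero_nat.eventually (gt_mem_nhds hε))).exists
  exact ((show CoarseLipschitzWith C (f · ω) from hω).oscillationLE_div_of_mul (hN k)
    (hosc k ω hωk)).mono hkε.le

/-- Probabilistic skeleton of the law of large numbers for volumes of
quasi-fuchsian manifolds: if `P`-almost surely `|f_{n+m}(ω) - f_n(ω)| ≤ C*m + C`,
and for all `ε, ζ > 0` there are `N ≥ 1` and a measurable set `E` with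
`P(E) ≥ 1 - ζ` on which the averaged subsequence `j ↦ f_{jN}(ω)/(jN)` is
bounded above and below (so its limsup and liminf are finite) with
`limsup - liminf ≤ ε`, then `(fₙ(ω)/n)` converges for `P`-almost every `ω`. -/
theorem ae_convergence_of_normalized_sequence
    {Ω : Type*} [MeasurableSpace Ω] (P : Measure Ω) [IsProbabilityMeasure P]
    (C : ℝ) (hC : 0 ≤ C)
    (f : ℕ → Ω → ℝ) (hmeas : ∀ n, Measurable (f n))
    (hlip : ∀ᵐ ω ∂P, ∀ n m : ℕ, |f (n + m) ω - f n ω| ≤ C * m + C)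
    (h : ∀ ε : ℝ, 0 < ε → ∀ ζ : ℝ, 0 < ζ → ∃ N : ℕ, 1 ≤ N ∧ ∃ E : Set Ω,
      MeasurableSet E ∧ 1 - ENNReal.ofReal ζ ≤ P E ∧
      ∀ ω ∈ E,
        IsBoundedUnder (· ≤ ·) atTop
          (fun j : ℕ => f (j * N) ω / ((j * N : ℕ) : ℝ)) ∧
        IsBoundedUnder (· ≥ ·) atTop
          (fun j : ℕ => f (j * N) ω / ((j * N : ℕ) : ℝ)) ∧
        limsup (fun j : ℕ => f (j * N) ω / ((j * N : ℕ) : ℝ)) atTop -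
          liminf (fun j : ℕ => f (j * N) ω / ((j * N : ℕ) : ℝ)) atTop ≤ ε) :
    ∀ᵐ ω ∂P, ∃ L : ℝ, Tendsto (fun n : ℕ => f n ω / (n : ℝ)) atTop (nhds L) :=
  ae_convergence_of_normalized_sequence_general P C f hlip h
end
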